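/- arXiv:2208.04793 — 4 statements merged into one kernel-verified Lean document; each statement's English description precedes it below -/
import Mathlib

section
/- Let E be a finite set, and for each e ∈ E let p(·,e) : ℝ≥0 → [0,1] be continuously differentiable. Let P_β be the product Bernoulli measure on {0,1}^E where coordinate e has success probability p(β,e), and let f : {0,1}^E → ℝ. Then the map β ↦ E_β[f] is differentiable, and its derivative equals Σ_{e∈E} p'(β,e) · E_β[f(ω^{e+}) − f(ω^{e−})], where ω^{e+} (resp. ω^{e−}) denotes ω with coordinate e set to 1 (resp. 0). -/
/-!
The weight of a configuration `ω` factorises as `(p(β,e) or 1 - p(β,e)) · W_e(ω)`, where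
`W_e(ω)` does not depend on `ω e`, so differentiating the product gives `±p'(β,e) · W_e(ω)` for
each coordinate `e`. Pairing each `ω` with its flip at `e`, the two signed contributions combine
to `(f(ω^{e+}) − f(ω^{e−})) · W_e(ω)`, and `W_e(ω) = W_e(ω) (p(β,e) + (1 - p(β,e)))` turns this
into the expectation on the right.
-/

open Finset Function

namespace Russo

variable {E : Type*} [Fintype E]

def bernoulliWeight (q : E → ℝ) (ω : E → Bool) : ℝ :=
  ∏ e, if ω e then q e else 1 - q e

variable [DecidableEq E]

def bernoulliWeightErase (q : E → ℝ) (e : E) (ω : E → Bool) : ℝ :=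
  ∏ e' ∈ univ.erase e, if ω e' then q e' else 1 - q e'

lemma bernoulliWeight_eq_mul_erase (q : E → ℝ) (e : E) (ω : E → Bool) :
    bernoulliWeight q ω = (if ω e then q e else 1 - q e) * bernoulliWeightErase q e ω :=
  (mul_prod_erase univ _ (mem_univ e)).symm

lemma bernoulliWeightErase_update (q : E → ℝ) (e : E) (ω : E → Bool) (b : Bool) :
    bernoulliWeightErase q e (update ω e b) = bernoulliWeightErase q e ω :=
  prod_congr rfl fun _ he' => by rw [update_of_ne (ne_of_mem_erase he')]

lemma hasDerivAt_bernoulliWeight {p : ℝ → E → ℝ} {q' : E → ℝ} {β : ℝ}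
    (hp : ∀ e, HasDerivAt (fun b => p b e) (q' e) β) (ω : E → Bool) :
    HasDerivAt (fun b => bernoulliWeight (p b) ω)
      (∑ e, q' e * ((if ω e then 1 else -1) * bernoulliWeightErase (p β) e ω)) β := by
  have hfactor : ∀ e, HasDerivAt (fun b => if ω e then p b e else 1 - p b e)
      ((if ω e then 1 else -1) * q' e) β := by
    intro e
    cases ω e
    · simpa using (hp e).const_sub 1
    · simpa using hp e
  refine (HasDerivAt.fun_finsetProd fun e (_ : e ∈ univ) => hfactor e).congr_deriv ?_
  exact sum_congr rfl fun e _ => by rw [smul_eq_mul, bernoulliWeightErase]; ring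

lemma sum_mul_sign_mul_bernoulliWeightErase (q : E → ℝ) (e : E) (f : (E → Bool) → ℝ) :
    ∑ ω, f ω * ((if ω e then 1 else -1) * bernoulliWeightErase q e ω) =
      ∑ ω, (f (update ω e true) - f (update ω e false)) * bernoulliWeight q ω := by
  rw [← sub_eq_zero, ← sum_sub_distrib]
  refine sum_ninvolution (fun ω => update ω e (!ω e)) (fun ω => ?_)
    (fun ω _ h => by simpa using congrFun h e) (fun _ => mem_univ _)
    (fun ω => by simp [update_idem])
  simp only [bernoulliWeight_eq_mul_erase q e, bernoulliWeightErase_update, update_idem,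
    update_self]
  cases hω : ω e <;> rw [← hω, update_eq_self] <;>
    simp only [hω, Bool.not_true, Bool.not_false, Bool.false_eq_true, if_true, if_false] <;> ring

end Russo

open Russo in
theorem stmt_0_general {E : Type*} [Fintype E] [DecidableEq E]
    (p p' : ℝ → E → ℝ)
    (hderiv : ∀ e β, HasDerivAt (fun b => p b e) (p' β e) β)
    (f : (E → Bool) → ℝ) (β : ℝ) :
    HasDerivAt
      (fun b => ∑ ω : E → Bool,
        f ω * ∏ e : E, (if ω e then p b e else 1 - p b e))
      (∑ e : E, p' β e *
        ∑ ω : E → Bool,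
          (f (Function.update ω e true) - f (Function.update ω e false)) *
            ∏ e' : E, (if ω e' then p β e' else 1 - p β e'))
      β := by
  have hsum := HasDerivAt.fun_sum fun ω (_ : ω ∈ univ) =>
    (hasDerivAt_bernoulliWeight (fun e => hderiv e β) ω).const_mul (f ω)
  refine hsum.congr_deriv ?_
  change _ = ∑ e, p' β e * ∑ ω, (_ - _) * bernoulliWeight (p β) ω
  simp_rw [← sum_mul_sign_mul_bernoulliWeightErase, mul_sum]
  rw [sum_comm]
  exact sum_congr rfl fun _ _ => sum_congr rfl fun _ _ => by ring

/-- Russo's formula for expectations: for a product Bernoulli measure on `{0,1}^E`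
with continuously differentiable inclusion probabilities `p(·, e)`, the expectation
of any `f : {0,1}^E → ℝ` is differentiable in `β`, with derivative
`∑_e p'(β,e) · E_β[f(ω^{e+}) − f(ω^{e−})]`. -/
theorem stmt_0 {E : Type*} [Fintype E] [DecidableEq E]
    (p p' : ℝ → E → ℝ)
    (hp01 : ∀ β e, 0 ≤ p β e ∧ p β e ≤ 1)
    (hderiv : ∀ e β, HasDerivAt (fun b => p b e) (p' β e) β)
    (hcont : ∀ e, Continuous fun b => p' b e)
    (f : (E → Bool) → ℝ) (β : ℝ) :
    HasDerivAt
      (fun b => ∑ ω : E → Bool,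
        f ω * ∏ e : E, (if ω e then p b e else 1 - p b e))
      (∑ e : E, p' β e *
        ∑ ω : E → Bool,
          (f (Function.update ω e true) - f (Function.update ω e false)) *
            ∏ e' : E, (if ω e' then p β e' else 1 - p β e'))
      β :=
  stmt_0_general p p' hderiv f β
end

section
/- In one-dimensional long-range percolation on {0,…,n−1} where for u < v the edge {u,v} is open independently with probability 1 − exp(−β ∫_u^{u+1}∫_v^{v+1}|x−y|^{−2}dxdy) (probability 1 for |u−v|=1), the expected graph distance between 0 and n−1 is at least (n−2)·n^{−β}. -/
/-!
Call `w ∈ (0, n-1)` a cut point of a configuration if no open edge `{u, v}` jumps over it,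
`u < w < v`. Every path from `0` to `n-1` visits every cut point, so the graph distance is at least
the number of cut points. The edges jumping over `w` are closed simultaneously with probability
`exp (-β ∑_{u < w < v} ∫∫ |x-y|⁻²) ≥ exp (-β log n) = n^{-β}`, because the double integrals over the
unit squares add up to `log (w+1) + log (n-w) - log n ≤ log n`. Linearity of expectation over the
`n-2` candidates finishes the proof.
-/

open MeasureTheory intervalIntegral Finset Real

theorem sum_boole_mul_prod_bernoulli {E R : Type*} [Fintype E] [DecidableEq E] [CommRing R]
    (q : E → R) (S : Finset E) :
    ∑ ω : E → Bool, (if ∀ e ∈ S, ω e = false then (1 : R) else 0) *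
        ∏ e, (if ω e then q e else 1 - q e) = ∏ e ∈ S, (1 - q e) := by
  set p : E → Bool → R := fun e b => if b then (if e ∈ S then 0 else q e) else 1 - q e
  have factor : ∀ ω : E → Bool, (if ∀ e ∈ S, ω e = false then (1 : R) else 0) *
      ∏ e, (if ω e then q e else 1 - q e) = ∏ e, p e (ω e) := by
    intro ω
    split_ifs with hS
    · rw [one_mul]
      refine prod_congr rfl fun e _ => ?_
      by_cases he : e ∈ S <;> simp [p, he, hS e]
    · obtain ⟨e, he, hωe⟩ := not_forall₂.1 hS
      rw [zero_mul, eq_comm]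
      exact prod_eq_zero (mem_univ e) (by simp [p, he, hωe])
  calc _ = ∏ e, ∑ b : Bool, p e b :=
        (sum_congr rfl fun ω _ => factor ω).trans (Fintype.prod_sum p).symm
    _ = ∏ e, (if e ∈ S then 1 - q e else 1) :=
        prod_congr rfl fun e _ => by by_cases he : e ∈ S <;> simp [p, he]
    _ = ∏ e ∈ S, (1 - q e) := Fintype.prod_ite_mem S _

namespace SimpleGraph

variable {α : Type*} [LinearOrder α]

def IsCutPoint (G : SimpleGraph α) (w : α) : Prop := ∀ ⦃a b⦄, G.Adj a b → a < w → b ≤ w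

theorem Walk.mem_support_of_isCutPoint {G : SimpleGraph α} {w : α} (hw : G.IsCutPoint w) :
    ∀ {a b : α} (p : G.Walk a b), a ≤ w → w ≤ b → w ∈ p.support
  | _, _, .nil, ha, hb => by simp [le_antisymm ha hb]
  | a, _, .cons hadj p, ha, hb => by
    rcases ha.eq_or_lt with rfl | ha
    · simp
    · exact List.mem_cons_of_mem _ (p.mem_support_of_isCutPoint hw (hw hadj ha) hb)

theorem card_filter_isCutPoint_le_dist [LocallyFiniteOrder α] {G : SimpleGraph α}
    [DecidablePred G.IsCutPoint] {s t : α} (hst : G.Reachable s t) :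
    #{w ∈ Ioo s t | G.IsCutPoint w} ≤ G.dist s t := by
  classical
  obtain ⟨p, hp⟩ := hst.exists_walk_length_eq_dist
  have hsub : {w ∈ Ioo s t | G.IsCutPoint w} ⊆ p.support.toFinset.erase s := by
    intro w hw
    simp only [mem_filter, mem_Ioo] at hw
    exact mem_erase.2 ⟨hw.1.1.ne', List.mem_toFinset.2
      (p.mem_support_of_isCutPoint hw.2 hw.1.1.le hw.1.2.le)⟩
  calc #{w ∈ Ioo s t | G.IsCutPoint w} ≤ #(p.support.toFinset.erase s) := card_le_card hsub
    _ = #p.support.toFinset - 1 := card_erase_of_mem (List.mem_toFinset.2 p.start_mem_support)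
    _ ≤ p.support.length - 1 := Nat.sub_le_sub_right (List.toFinset_card_le _) 1
    _ = G.dist s t := by rw [Walk.length_support, hp]; rfl

end SimpleGraph

theorem integral_one_div_sub_sq_right {x c d : ℝ} (hxc : x < c) (hcd : c ≤ d) :
    ∫ y in c..d, 1 / (x - y) ^ 2 = (c - x)⁻¹ - (d - x)⁻¹ := by
  have hne : ∀ y ∈ Set.uIcc c d, x - y ≠ 0 := fun y hy =>
    (sub_neg.2 (hxc.trans_le (Set.uIcc_of_le hcd ▸ hy).1)).ne
  have hderiv : ∀ y ∈ Set.uIcc c d, HasDerivAt (fun y => (x - y)⁻¹) (1 / (x - y) ^ 2) y :=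
    fun y hy => (((hasDerivAt_id y).const_sub x).inv (hne y hy)).congr_deriv (by simp)
  have hcont : ContinuousOn (fun y => 1 / (x - y) ^ 2) (Set.uIcc c d) :=
    continuousOn_const.div (by fun_prop) fun y hy => pow_ne_zero 2 (hne y hy)
  rw [integral_eq_sub_of_hasDerivAt hderiv hcont.intervalIntegrable, ← neg_sub c, ← neg_sub d,
    inv_neg, inv_neg]
  ring

theorem integral_inv_sub_sub_inv_sub {a b c d : ℝ} (hab : a ≤ b) (hbc : b < c) (hcd : c ≤ d) :
    ∫ x in a..b, ((c - x)⁻¹ - (d - x)⁻¹) =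
      log (c - a) + log (d - b) - log (c - b) - log (d - a) := by
  have hpos : ∀ x ∈ Set.uIcc a b, 0 < c - x ∧ 0 < d - x := fun x hx => by
    have := (Set.uIcc_of_le hab ▸ hx).2
    constructor <;> linarith
  have hderiv : ∀ x ∈ Set.uIcc a b,
      HasDerivAt (fun x => log (d - x) - log (c - x)) ((c - x)⁻¹ - (d - x)⁻¹) x := fun x hx =>
    ((((hasDerivAt_id x).const_sub d).log (hpos x hx).2.ne').sub
      (((hasDerivAt_id x).const_sub c).log (hpos x hx).1.ne')).congr_deriv (by simp; ring)
  have hcont : ContinuousOn (fun x => (c - x)⁻¹ - (d - x)⁻¹) (Set.uIcc a b) :=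
    ((continuousOn_const.sub continuousOn_id).inv₀ fun x hx => (hpos x hx).1.ne').sub
      ((continuousOn_const.sub continuousOn_id).inv₀ fun x hx => (hpos x hx).2.ne')
  rw [integral_eq_sub_of_hasDerivAt hderiv hcont.intervalIntegrable]
  ring

theorem integral_integral_one_div_sub_sq {a b c d : ℝ} (hab : a ≤ b) (hbc : b < c) (hcd : c ≤ d) :
    ∫ x in a..b, ∫ y in c..d, 1 / (x - y) ^ 2 =
      log (c - a) + log (d - b) - log (c - b) - log (d - a) := by
  rw [← integral_inv_sub_sub_inv_sub hab hbc hcd]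
  refine integral_congr fun x hx => integral_one_div_sub_sq_right ?_ hcd
  exact ((Set.uIcc_of_le hab ▸ hx).2).trans_lt hbc

theorem sum_range_sum_Ico_mixed_diff {M : Type*} [AddCommGroup M] (f : ℕ → ℕ → M) (m : ℕ)
    {a b : ℕ} (hab : a ≤ b) :
    ∑ u ∈ range m, ∑ v ∈ Ico a b, (f u v + f (u + 1) (v + 1) - f (u + 1) v - f u (v + 1)) =
      f 0 a + f m b - f m a - f 0 b := by
  have inner : ∀ u, ∑ v ∈ Ico a b, (f u v + f (u + 1) (v + 1) - f (u + 1) v - f u (v + 1)) =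
      (f (u + 1) b - f u b) - (f (u + 1) a - f u a) := fun u => by
    rw [← sum_Ico_sub (fun v => f (u + 1) v - f u v) hab]
    exact sum_congr rfl fun v _ => by abel
  rw [sum_congr rfl fun u _ => inner u, sum_sub_distrib, sum_range_sub (fun u => f u b),
    sum_range_sub (fun u => f u a)]
  abel

namespace LongRangePercolation

abbrev Edge (n : ℕ) := {p : Fin n × Fin n // p.1 < p.2}

noncomputable def crossIntegral (u v : ℕ) : ℝ :=
  ∫ x in (u : ℝ)..(u : ℝ) + 1, ∫ y in (v : ℝ)..(v : ℝ) + 1, 1 / (x - y) ^ 2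

noncomputable def openProb (β : ℝ) (u v : ℕ) : ℝ :=
  if u + 1 = v then 1 else 1 - exp (-β * crossIntegral u v)

def graph {n : ℕ} (ω : Edge n → Bool) : SimpleGraph (Fin n) :=
  SimpleGraph.fromRel fun a b => (a : ℕ) + 1 = b ∨ ∃ h : a < b, ω ⟨(a, b), h⟩ = true

def crossingEdges {n : ℕ} (w : Fin n) : Finset (Edge n) := {e | e.1.1 < w ∧ w < e.1.2}

theorem crossIntegral_nonneg (u v : ℕ) : 0 ≤ crossIntegral u v :=
  integral_nonneg (by linarith) fun _ _ => integral_nonneg (by linarith) fun _ _ => by positivity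

-- The casts are kept in `ℕ` so that the right side has the shape `f u v + f (u+1) (v+1) - …`
-- of `sum_range_sum_Ico_mixed_diff` with `f s t = log (t - s)`.
theorem crossIntegral_eq {u v : ℕ} (huv : u + 1 < v) :
    crossIntegral u v = log ((v : ℝ) - u) + log (((v + 1 : ℕ) : ℝ) - (u + 1 : ℕ)) -
      log ((v : ℝ) - (u + 1 : ℕ)) - log (((v + 1 : ℕ) : ℝ) - u) := by
  have huv' : (u : ℝ) + 1 < v := by exact_mod_cast huv
  rw [crossIntegral, integral_integral_one_div_sub_sq (by linarith) huv' (by linarith)]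
  push_cast
  ring_nf

theorem sum_crossIntegral_crossingEdges_le {n : ℕ} (w : Fin n) :
    ∑ e ∈ crossingEdges w, crossIntegral e.1.1 e.1.2 ≤ log n := by
  have hinj : Set.InjOn (fun e : Edge n => ((e.1.1 : ℕ), (e.1.2 : ℕ))) (crossingEdges w) :=
    fun e _ e' _ h => by
      simp only [Prod.mk.injEq] at h
      exact Subtype.ext (Prod.ext (Fin.ext h.1) (Fin.ext h.2))
  have hsub : (crossingEdges w).image (fun e : Edge n => ((e.1.1 : ℕ), (e.1.2 : ℕ))) ⊆
      range w ×ˢ Ico ((w : ℕ) + 1) n := by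
    intro p hp
    obtain ⟨e, he, rfl⟩ := mem_image.1 hp
    simp only [crossingEdges, mem_filter, mem_univ, true_and, Fin.lt_def] at he
    simp only [mem_product, mem_range, mem_Ico]
    exact ⟨he.1, he.2, e.1.2.isLt⟩
  have hw : (w : ℕ) + 1 ≤ n := w.isLt
  calc ∑ e ∈ crossingEdges w, crossIntegral e.1.1 e.1.2
      ≤ ∑ p ∈ range w ×ˢ Ico ((w : ℕ) + 1) n, crossIntegral p.1 p.2 := by
        rw [← sum_image (f := fun p : ℕ × ℕ => crossIntegral p.1 p.2) hinj]
        exact sum_le_sum_of_subset_of_nonneg hsub fun p _ _ => crossIntegral_nonneg _ _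
    _ = log ((w : ℝ) + 1) + log ((n : ℝ) - w) - log n := by
        rw [sum_product, sum_congr rfl fun u hu => sum_congr rfl fun v hv =>
          crossIntegral_eq (by simp only [mem_range, mem_Ico] at hu hv; omega)]
        rw [sum_range_sum_Ico_mixed_diff (fun s t : ℕ => log ((t : ℝ) - s)) w hw]
        push_cast
        simp
    _ ≤ log n := by
        have hn : (w : ℝ) + 1 ≤ n := by exact_mod_cast hw
        have h1 : log ((w : ℝ) + 1) ≤ log n := log_le_log (by positivity) hn
        have h2 : log ((n : ℝ) - w) ≤ log n :=
          log_le_log (by linarith) (by linarith [w.val.cast_nonneg (α := ℝ)])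
        linarith

theorem one_sub_openProb_of_mem_crossingEdges {n : ℕ} (β : ℝ) {w : Fin n} {e : Edge n}
    (he : e ∈ crossingEdges w) :
    1 - openProb β e.1.1 e.1.2 = exp (-β * crossIntegral e.1.1 e.1.2) := by
  simp only [crossingEdges, mem_filter, mem_univ, true_and, Fin.lt_def] at he
  rw [openProb, if_neg (by omega), sub_sub_cancel]

theorem rpow_neg_le_prod_crossingEdges {n : ℕ} {β : ℝ} (hβ : 0 ≤ β) (w : Fin n) :
    (n : ℝ) ^ (-β) ≤ ∏ e ∈ crossingEdges w, (1 - openProb β e.1.1 e.1.2) := by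
  have hn : (0 : ℝ) < n := by exact_mod_cast w.pos
  rw [prod_congr rfl fun e he => one_sub_openProb_of_mem_crossingEdges β he, ← exp_sum,
    ← mul_sum, rpow_def_of_pos hn, exp_le_exp]
  nlinarith [sum_crossIntegral_crossingEdges_le w]

theorem openProb_mem_Icc {β : ℝ} (hβ : 0 ≤ β) (u v : ℕ) : openProb β u v ∈ Set.Icc 0 1 := by
  have hexp : exp (-β * crossIntegral u v) ≤ 1 :=
    exp_le_one_iff.2 (by nlinarith [crossIntegral_nonneg u v])
  unfold openProb
  split_ifs
  · simp
  · constructor <;> linarith [exp_pos (-β * crossIntegral u v)]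

theorem isCutPoint_graph {n : ℕ} {ω : Edge n → Bool} {w : Fin n}
    (hω : ∀ e ∈ crossingEdges w, ω e = false) : (graph ω).IsCutPoint w := by
  intro a b hab haw
  by_contra! hwb
  have hcross : ∀ h : a < b, ω ⟨(a, b), h⟩ = false := fun h =>
    hω _ (by simp [crossingEdges, haw, hwb])
  rw [graph, SimpleGraph.fromRel_adj] at hab
  rw [Fin.lt_def] at haw hwb
  rcases hab.2 with (h | ⟨h, hωab⟩) | (h | ⟨h, _⟩)
  · omega
  · simp [hcross h] at hωab
  · omega
  · rw [Fin.lt_def] at h; omega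

theorem pathGraph_le_graph {n : ℕ} (ω : Edge n → Bool) : SimpleGraph.pathGraph n ≤ graph ω :=
  fun a b hab => by
    rw [SimpleGraph.pathGraph_adj] at hab
    rw [graph, SimpleGraph.fromRel_adj]
    refine ⟨fun h => by subst h; omega, ?_⟩
    rcases hab with h | h
    · exact Or.inl (Or.inl h)
    · exact Or.inr (Or.inl h)

theorem card_closedCrossings_le_dist {n : ℕ} (ω : Edge n → Bool) (s t : Fin n) :
    #{w ∈ Ioo s t | ∀ e ∈ crossingEdges w, ω e = false} ≤ (graph ω).dist s t := by
  classical
  calc #{w ∈ Ioo s t | ∀ e ∈ crossingEdges w, ω e = false}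
      ≤ #{w ∈ Ioo s t | (graph ω).IsCutPoint w} :=
        card_le_card (monotone_filter_right _ fun _ _ => isCutPoint_graph)
    _ ≤ (graph ω).dist s t :=
        SimpleGraph.card_filter_isCutPoint_le_dist
          ((SimpleGraph.pathGraph_preconnected n s t).mono (pathGraph_le_graph ω))

end LongRangePercolation

open LongRangePercolation

/-- In one-dimensional long-range percolation on `{0,…,n−1}` (edge `{u,v}`, `u < v`, open
independently with probability `1 − exp(−β ∫_u^{u+1}∫_v^{v+1}|x−y|^{−2})`, and probability `1`
for nearest neighbours), the expected graph distance between `0` and `n−1` is at least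
`(n−2)·n^{−β}`.  The expectation is written as a sum over configurations, weighted by the
product Bernoulli measure. -/
theorem stmt_6 (n : ℕ) (hn : 2 ≤ n) (β : ℝ) (hβ : 0 ≤ β) :
    ((n : ℝ) - 2) * (n : ℝ) ^ (-β) ≤
      ∑ ω : ({p : Fin n × Fin n // p.1 < p.2} → Bool),
        ((SimpleGraph.fromRel (fun a b : Fin n =>
            (a : ℕ) + 1 = (b : ℕ) ∨ ∃ h : a < b, ω ⟨(a, b), h⟩ = true)).dist
              ⟨0, by omega⟩ ⟨n - 1, by omega⟩ : ℝ) *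
          ∏ e : {p : Fin n × Fin n // p.1 < p.2},
            (if ω e then
                (if ((e.1.1 : ℕ) + 1 = (e.1.2 : ℕ)) then (1 : ℝ) else
                  1 - Real.exp (-β * ∫ x in ((e.1.1 : ℕ) : ℝ)..(((e.1.1 : ℕ) : ℝ) + 1),
                    ∫ y in ((e.1.2 : ℕ) : ℝ)..(((e.1.2 : ℕ) : ℝ) + 1), 1 / (x - y) ^ 2))
              else
                1 - (if ((e.1.1 : ℕ) + 1 = (e.1.2 : ℕ)) then (1 : ℝ) else
                  1 - Real.exp (-β * ∫ x in ((e.1.1 : ℕ) : ℝ)..(((e.1.1 : ℕ) : ℝ) + 1),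
                    ∫ y in ((e.1.2 : ℕ) : ℝ)..(((e.1.2 : ℕ) : ℝ) + 1), 1 / (x - y) ^ 2))) := by
  set s : Fin n := ⟨0, by omega⟩
  set t : Fin n := ⟨n - 1, by omega⟩
  set μ : (Edge n → Bool) → ℝ :=
    fun ω => ∏ e, if ω e then openProb β e.1.1 e.1.2 else 1 - openProb β e.1.1 e.1.2
  have hμ : ∀ ω, 0 ≤ μ ω := fun ω => prod_nonneg fun e _ => by
    have := openProb_mem_Icc hβ e.1.1 e.1.2
    split_ifs <;> linarith [this.1, this.2]
  show ((n : ℝ) - 2) * (n : ℝ) ^ (-β) ≤ ∑ ω, ((graph ω).dist s t : ℝ) * μ ω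
  calc ((n : ℝ) - 2) * (n : ℝ) ^ (-β) = ∑ _w ∈ Ioo s t, (n : ℝ) ^ (-β) := by
        rw [sum_const, Fin.card_Ioo, nsmul_eq_mul]
        have hcard : (t : ℕ) - s - 1 = n - 2 := by simp only [s, t]; omega
        rw [hcard, Nat.cast_sub hn, Nat.cast_ofNat]
    _ ≤ ∑ w ∈ Ioo s t, ∏ e ∈ crossingEdges w, (1 - openProb β e.1.1 e.1.2) :=
        sum_le_sum fun w _ => rpow_neg_le_prod_crossingEdges hβ w
    _ = ∑ w ∈ Ioo s t, ∑ ω, (if ∀ e ∈ crossingEdges w, ω e = false then 1 else 0) * μ ω :=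
        sum_congr rfl fun w _ => (sum_boole_mul_prod_bernoulli _ _).symm
    _ = ∑ ω, (#{w ∈ Ioo s t | ∀ e ∈ crossingEdges w, ω e = false} : ℝ) * μ ω := by
        rw [sum_comm]
        exact sum_congr rfl fun ω _ => by rw [← sum_mul, sum_boole]
    _ ≤ ∑ ω, ((graph ω).dist s t : ℝ) * μ ω :=
        sum_le_sum fun ω _ => mul_le_mul_of_nonneg_right
          (by exact_mod_cast card_closedCrossings_le_dist ω s t) (hμ ω)
end

section
/- Consider long-range percolation on ℤ^d where for distinct u, v the edge {u,v} is open independently with probability 1 − exp(−β ∫_{u+C}∫_{v+C} ‖x−y‖^{−2d} dy dx), C = [0,1)^d. Then for all n ≥ 1 and u, v ∈ ℤ^d, the probability that no edge joins the boxes V_u^n = nu + {0,…,n−1}^d and V_v^n = nv + {0,…,n−1}^d equals the probability that the single edge {u,v} is closed, i.e. exp(−β ∫_{u+C}∫_{v+C} ‖x−y‖^{−2d} dy dx). -/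
/-! Only the all-closed configuration has no open edge, and its weight is `exp (-β * ∑ₑ Iₑ)`,
so it suffices that the interaction integrals `Iₑ` of the pairs of unit subcubes add up to the
integral over their disjoint union `n • (C_u ×ˢ C_v)`. The kernel is homogeneous of degree `-2d`
and the dilation by `n` has Jacobian `n ^ (2d)` on `ℝᵈ × ℝᵈ`, so this equals the integral over
`C_u ×ˢ C_v`. Since `|u i - v i| ≥ 2`, the kernel is at most `1` on all these sets, which makes
every integral finite, so that they can be split and recombined. -/

open MeasureTheory Set Function Pointwise

namespace LongRangePercolation

lemma smul_set_prod {M α β : Type*} [SMul M α] [SMul M β] (c : M) (s : Set α) (t : Set β) :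
    c • (s ×ˢ t) = (c • s) ×ˢ (c • t) :=
  prodMap_image_prod _ _ s t

lemma pairwise_disjoint_prod {ι κ α β : Type*} {s : ι → Set α} {t : κ → Set β}
    (hs : Pairwise (Disjoint on s)) (ht : Pairwise (Disjoint on t)) :
    Pairwise (Disjoint on fun e : ι × κ => s e.1 ×ˢ t e.2) := fun _ _ he =>
  disjoint_prod.mpr <| (not_and_or.mp (Prod.ext_iff.not.mp he)).imp (hs ·) (ht ·)

variable {d : ℕ}

noncomputable def kernel (d : ℕ) (x y : Fin d → ℝ) : ℝ :=
  1 / √(∑ i, (x i - y i) ^ 2) ^ (2 * d)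

lemma kernel_nonneg (x y : Fin d → ℝ) : 0 ≤ kernel d x y := by
  unfold kernel; positivity

lemma measurable_kernel : Measurable fun p : (Fin d → ℝ) × (Fin d → ℝ) => kernel d p.1 p.2 := by
  unfold kernel; fun_prop

lemma kernel_le_one {x y : Fin d → ℝ} (i : Fin d) (h : 1 ≤ |x i - y i|) : kernel d x y ≤ 1 := by
  have hsq : (x i - y i) ^ 2 ≤ ∑ j, (x j - y j) ^ 2 :=
    Finset.single_le_sum (f := fun j => (x j - y j) ^ 2) (fun j _ => sq_nonneg _)
      (Finset.mem_univ i)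
  have hdist : 1 ≤ √(∑ j, (x j - y j) ^ 2) :=
    h.trans ((Real.sqrt_sq_eq_abs _).symm.trans_le (Real.sqrt_le_sqrt hsq))
  rw [kernel, div_le_one (by positivity)]
  exact one_le_pow₀ hdist

lemma kernel_smul {c : ℝ} (hc : 0 ≤ c) (x y : Fin d → ℝ) :
    kernel d (c • x) (c • y) = (c ^ (2 * d))⁻¹ * kernel d x y := by
  have hsum : ∑ i, ((c • x) i - (c • y) i) ^ 2 = c ^ 2 * ∑ i, (x i - y i) ^ 2 := by
    rw [Finset.mul_sum]
    exact Finset.sum_congr rfl fun i _ => by simp only [Pi.smul_apply, smul_eq_mul]; ring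
  rw [kernel, kernel, hsum, Real.sqrt_mul (sq_nonneg c), Real.sqrt_sq hc, mul_pow, one_div,
    one_div, mul_inv]

lemma integrableOn_kernel {S : Set ((Fin d → ℝ) × (Fin d → ℝ))} (hS : MeasurableSet S)
    (hS_fin : volume S ≠ ⊤) (hsep : ∀ p ∈ S, ∃ i, 1 ≤ |p.1 i - p.2 i|) :
    IntegrableOn (fun p => kernel d p.1 p.2) S :=
  Measure.integrableOn_of_bounded hS_fin measurable_kernel.aestronglyMeasurable (M := 1) <|
    ae_restrict_of_forall_mem hS fun p hp => by
      obtain ⟨i, hi⟩ := hsep p hp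
      rw [Real.norm_of_nonneg (kernel_nonneg _ _)]
      exact kernel_le_one i hi

instance : (volume : Measure ((Fin d → ℝ) × (Fin d → ℝ))).IsAddHaarMeasure :=
  Measure.prod.instIsAddHaarMeasure _ _

lemma setIntegral_kernel_smul {c : ℝ} (hc : 0 < c) (S : Set ((Fin d → ℝ) × (Fin d → ℝ))) :
    ∫ p in c • S, kernel d p.1 p.2 = ∫ p in S, kernel d p.1 p.2 := by
  have h := Measure.setIntegral_comp_smul_of_pos volume (fun p => kernel d p.1 p.2) S hc
  have hrank : Module.finrank ℝ ((Fin d → ℝ) × (Fin d → ℝ)) = 2 * d := by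
    rw [Module.finrank_prod, Module.finrank_fin_fun]; ring
  simp only [Prod.smul_fst, Prod.smul_snd, kernel_smul hc.le, integral_const_mul, hrank,
    smul_eq_mul] at h
  exact (mul_left_cancel₀ (inv_ne_zero (pow_ne_zero _ hc.ne')) h).symm

def unitCube (z : Fin d → ℤ) : Set (Fin d → ℝ) :=
  univ.pi fun i => Ico (z i : ℝ) (z i + 1)

lemma measurableSet_unitCube (z : Fin d → ℤ) : MeasurableSet (unitCube z) :=
  .univ_pi fun _ => measurableSet_Ico

lemma volume_unitCube (z : Fin d → ℤ) : volume (unitCube z) = 1 := by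
  simp [unitCube, volume_pi_pi, Real.volume_Ico]

lemma pairwise_disjoint_unitCube : Pairwise (Disjoint on unitCube (d := d)) := by
  intro z z' hzz'
  obtain ⟨i, hi⟩ := ne_iff.mp hzz'
  refine Set.disjoint_left.mpr fun x hx hx' => hi ?_
  have hfloor : ∀ w : Fin d → ℤ, x ∈ unitCube w → ⌊x i⌋ = w i := fun w hw =>
    Int.floor_eq_iff.mpr (hw i (mem_univ i))
  rw [← hfloor z hx, hfloor z' hx']

lemma iUnion_Ico_intCast_add (m : ℤ) (n : ℕ) :
    ⋃ j : Fin n, Ico (((m + j : ℤ)) : ℝ) ((m + j : ℤ) + 1) = Ico (m : ℝ) (m + n) := by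
  ext x
  simp only [mem_iUnion, mem_Ico]
  constructor
  · rintro ⟨j, hjx, hxj⟩
    have hj : (j : ℝ) + 1 ≤ n := by exact_mod_cast j.2
    push_cast at hjx hxj
    constructor <;> linarith [(j.1.cast_nonneg : (0 : ℝ) ≤ j)]
  · rintro ⟨hmx, hxn⟩
    have hm : m ≤ ⌊x⌋ := Int.le_floor.mpr hmx
    have hn : ⌊x⌋ < m + n := Int.floor_lt.mpr (by push_cast; exact hxn)
    refine ⟨⟨(⌊x⌋ - m).toNat, by omega⟩, ?_⟩
    simp only [Int.toNat_of_nonneg (sub_nonneg.mpr hm), add_sub_cancel, Int.floor_le,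
      Int.lt_floor_add_one, and_self]

lemma smul_unitCube {n : ℕ} (hn : 1 ≤ n) (u : Fin d → ℤ) :
    (n : ℝ) • unitCube u = ⋃ k : Fin d → Fin n, unitCube fun i => n * u i + k i := by
  have hn' : (0 : ℝ) < n := by exact_mod_cast hn
  calc (n : ℝ) • unitCube u
      = univ.pi fun i => Ico ((n * u i : ℤ) : ℝ) ((n * u i : ℤ) + n) := by
        rw [unitCube, smul_set_univ_pi]
        refine pi_congr rfl fun i _ => ?_
        rw [Pi.smul_apply, LinearOrderedField.smul_Ico hn']
        push_cast
        ring_nf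
    _ = univ.pi fun i => ⋃ j : Fin n, Ico ((n * u i + j : ℤ) : ℝ) ((n * u i + j : ℤ) + 1) := by
        simp only [iUnion_Ico_intCast_add]
    _ = _ := (iUnion_univ_pi _).symm

lemma pairwise_disjoint_unitCube_block (n : ℕ) (u : Fin d → ℤ) :
    Pairwise (Disjoint on fun k : Fin d → Fin n => unitCube fun i => n * u i + k i) :=
  pairwise_disjoint_unitCube.comp_of_injective fun k k' h =>
    funext fun i => Fin.ext (by have := congrFun h i; omega)

lemma one_le_abs_sub_of_mem_unitCube {u v : Fin d → ℤ} {i : Fin d} (huv : 2 ≤ |u i - v i|)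
    {x y : Fin d → ℝ} (hx : x ∈ unitCube u) (hy : y ∈ unitCube v) : 1 ≤ |x i - y i| := by
  obtain ⟨hux, hxu⟩ := hx i (mem_univ i)
  obtain ⟨hvy, hyv⟩ := hy i (mem_univ i)
  have hoff : |(x i - u i) - (y i - v i)| < 1 := abs_sub_lt_iff.mpr ⟨by linarith, by linarith⟩
  have := calc (2 : ℝ) ≤ |(u i : ℝ) - v i| := by exact_mod_cast huv
    _ = |(x i - y i) - ((x i - u i) - (y i - v i))| := by ring_nf
    _ ≤ |x i - y i| + |(x i - u i) - (y i - v i)| := abs_sub _ _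
  linarith

lemma integrableOn_kernel_smul_unitCube_prod {c : ℝ} (hc : 1 ≤ c) {u v : Fin d → ℤ} {i : Fin d}
    (huv : 2 ≤ |u i - v i|) :
    IntegrableOn (fun p => kernel d p.1 p.2) (c • (unitCube u ×ˢ unitCube v)) := by
  refine integrableOn_kernel
    (((measurableSet_unitCube u).prod (measurableSet_unitCube v)).const_smul₀ _) ?_ ?_
  · rw [Measure.addHaar_smul, Measure.volume_eq_prod, Measure.prod_prod, volume_unitCube,
      volume_unitCube, mul_one, mul_one]
    exact ENNReal.ofReal_ne_top
  · rintro _ ⟨p, hp, rfl⟩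
    refine ⟨i, ?_⟩
    simp only [Prod.smul_fst, Prod.smul_snd, Pi.smul_apply, smul_eq_mul, ← mul_sub, abs_mul,
      abs_of_nonneg (zero_le_one.trans hc)]
    exact one_le_mul_of_one_le_of_one_le hc (one_le_abs_sub_of_mem_unitCube huv hp.1 hp.2)

lemma sum_integral_kernel_subcubes {n : ℕ} (hn : 1 ≤ n) {u v : Fin d → ℤ}
    (hsep : ∃ i, 2 ≤ |u i - v i|) :
    ∑ e : (Fin d → Fin n) × (Fin d → Fin n),
        ∫ x in unitCube (fun i => n * u i + e.1 i),
          ∫ y in unitCube (fun i => n * v i + e.2 i), kernel d x y =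
      ∫ x in unitCube u, ∫ y in unitCube v, kernel d x y := by
  obtain ⟨i, hi⟩ := hsep
  have hn' : (1 : ℝ) ≤ n := by exact_mod_cast hn
  set S := unitCube u ×ˢ unitCube v
  have hint : IntegrableOn (fun p => kernel d p.1 p.2) ((n : ℝ) • S) :=
    integrableOn_kernel_smul_unitCube_prod hn' hi
  have hunion : (n : ℝ) • S = ⋃ e : (Fin d → Fin n) × (Fin d → Fin n),
      unitCube (fun i => n * u i + e.1 i) ×ˢ unitCube (fun i => n * v i + e.2 i) := by
    rw [smul_set_prod, smul_unitCube hn, smul_unitCube hn, ← iUnion_prod]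
  have hsub : ∀ e : (Fin d → Fin n) × (Fin d → Fin n),
      unitCube (fun i => n * u i + e.1 i) ×ˢ unitCube (fun i => n * v i + e.2 i) ⊆
        (n : ℝ) • S :=
    fun e => hunion ▸ subset_iUnion_of_subset e subset_rfl
  calc _ = ∑ e : (Fin d → Fin n) × (Fin d → Fin n),
        ∫ p in unitCube (fun i => n * u i + e.1 i) ×ˢ unitCube (fun i => n * v i + e.2 i),
          kernel d p.1 p.2 :=
        Finset.sum_congr rfl fun e _ => (setIntegral_prod _ (hint.mono_set (hsub e))).symm
    _ = ∫ p in (n : ℝ) • S, kernel d p.1 p.2 := by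
        rw [hunion]
        refine (integral_iUnion_fintype (fun e => ?_) ?_ fun e => hint.mono_set (hsub e)).symm
        · exact (measurableSet_unitCube _).prod (measurableSet_unitCube _)
        · exact pairwise_disjoint_prod (pairwise_disjoint_unitCube_block n u)
            (pairwise_disjoint_unitCube_block n v)
    _ = ∫ p in S, kernel d p.1 p.2 := setIntegral_kernel_smul (zero_lt_one.trans_le hn') S
    _ = _ := by
        have hint₁ := integrableOn_kernel_smul_unitCube_prod (d := d) le_rfl hi
        rw [one_smul, Measure.volume_eq_prod] at hint₁
        exact setIntegral_prod _ hint₁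

end LongRangePercolation

theorem stmt_12_general (d n : ℕ) (hn : 1 ≤ n) (β : ℝ)
    (u v : Fin d → ℤ) (hsep : ∃ i, 2 ≤ |u i - v i|) :
    ∑ ω ∈ Finset.univ.filter
        (fun ω : ((Fin d → Fin n) × (Fin d → Fin n)) → Bool => ∀ e, ω e = false),
      ∏ e : (Fin d → Fin n) × (Fin d → Fin n),
        (if ω e then
            1 - Real.exp (-β *
              ∫ x in (Set.univ.pi fun i : Fin d =>
                  Set.Ico ((((n : ℤ) * u i + (e.1 i : ℕ) : ℤ) : ℝ))
                    ((((n : ℤ) * u i + (e.1 i : ℕ) : ℤ) : ℝ) + 1)),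
                ∫ y in (Set.univ.pi fun i : Fin d =>
                    Set.Ico ((((n : ℤ) * v i + (e.2 i : ℕ) : ℤ) : ℝ))
                      ((((n : ℤ) * v i + (e.2 i : ℕ) : ℤ) : ℝ) + 1)),
                  1 / Real.sqrt (∑ i, (x i - y i) ^ 2) ^ (2 * d))
          else
            Real.exp (-β *
              ∫ x in (Set.univ.pi fun i : Fin d =>
                  Set.Ico ((((n : ℤ) * u i + (e.1 i : ℕ) : ℤ) : ℝ))
                    ((((n : ℤ) * u i + (e.1 i : ℕ) : ℤ) : ℝ) + 1)),
                ∫ y in (Set.univ.pi fun i : Fin d =>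
                    Set.Ico ((((n : ℤ) * v i + (e.2 i : ℕ) : ℤ) : ℝ))
                      ((((n : ℤ) * v i + (e.2 i : ℕ) : ℤ) : ℝ) + 1)),
                  1 / Real.sqrt (∑ i, (x i - y i) ^ 2) ^ (2 * d))) =
      Real.exp (-β *
        ∫ x in (Set.univ.pi fun i : Fin d => Set.Ico ((u i : ℝ)) ((u i : ℝ) + 1)),
          ∫ y in (Set.univ.pi fun i : Fin d => Set.Ico ((v i : ℝ)) ((v i : ℝ) + 1)),
            1 / Real.sqrt (∑ i, (x i - y i) ^ 2) ^ (2 * d)) := by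
  have hclosed : Finset.univ.filter
      (fun ω : ((Fin d → Fin n) × (Fin d → Fin n)) → Bool => ∀ e, ω e = false) =
        {fun _ => false} := by
    ext ω
    simp [funext_iff]
  rw [hclosed, Finset.sum_singleton]
  simp only [Bool.false_eq_true, if_false]
  rw [← Real.exp_sum, ← Finset.mul_sum]
  exact congrArg (fun s => Real.exp (-β * s))
    (LongRangePercolation.sum_integral_kernel_subcubes hn hsep)

/-- Self-similarity: the probability (written as the weighted sum over configurations of
the finitely many edges between the two boxes) that no edge joins `V_u^n = nu + {0,…,n−1}^d`
and `V_v^n = nv + {0,…,n−1}^d` equals the probability `exp(−β ∫_{u+C}∫_{v+C} ‖x−y‖₂^{−2d})`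
that the single edge `{u,v}` is closed. -/
theorem stmt_12 (d n : ℕ) (hd : 1 ≤ d) (hn : 1 ≤ n) (β : ℝ) (hβ : 0 ≤ β)
    (u v : Fin d → ℤ) (hsep : ∃ i, 2 ≤ |u i - v i|) :
    ∑ ω ∈ Finset.univ.filter
        (fun ω : ((Fin d → Fin n) × (Fin d → Fin n)) → Bool => ∀ e, ω e = false),
      ∏ e : (Fin d → Fin n) × (Fin d → Fin n),
        (if ω e then
            1 - Real.exp (-β *
              ∫ x in (Set.univ.pi fun i : Fin d =>
                  Set.Ico ((((n : ℤ) * u i + (e.1 i : ℕ) : ℤ) : ℝ))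
                    ((((n : ℤ) * u i + (e.1 i : ℕ) : ℤ) : ℝ) + 1)),
                ∫ y in (Set.univ.pi fun i : Fin d =>
                    Set.Ico ((((n : ℤ) * v i + (e.2 i : ℕ) : ℤ) : ℝ))
                      ((((n : ℤ) * v i + (e.2 i : ℕ) : ℤ) : ℝ) + 1)),
                  1 / Real.sqrt (∑ i, (x i - y i) ^ 2) ^ (2 * d))
          else
            Real.exp (-β *
              ∫ x in (Set.univ.pi fun i : Fin d =>
                  Set.Ico ((((n : ℤ) * u i + (e.1 i : ℕ) : ℤ) : ℝ))
                    ((((n : ℤ) * u i + (e.1 i : ℕ) : ℤ) : ℝ) + 1)),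
                ∫ y in (Set.univ.pi fun i : Fin d =>
                    Set.Ico ((((n : ℤ) * v i + (e.2 i : ℕ) : ℤ) : ℝ))
                      ((((n : ℤ) * v i + (e.2 i : ℕ) : ℤ) : ℝ) + 1)),
                  1 / Real.sqrt (∑ i, (x i - y i) ^ 2) ^ (2 * d))) =
      Real.exp (-β *
        ∫ x in (Set.univ.pi fun i : Fin d => Set.Ico ((u i : ℝ)) ((u i : ℝ) + 1)),
          ∫ y in (Set.univ.pi fun i : Fin d => Set.Ico ((v i : ℝ)) ((v i : ℝ) + 1)),
            1 / Real.sqrt (∑ i, (x i - y i) ^ 2) ^ (2 * d)) :=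
  stmt_12_general d n hn β u v hsep
end

section
/- For all n ≥ 3, Σ_{k=0}^{n−3} Σ_{l=2}^{n−1−k} (1−l)/(l+1)² ≤ 5n + 4 − n·log n. -/
open Finset Real
open scoped Nat

/-!
Termwise `(1 - l) / (l + 1)² ≤ 3 / l² - 1 / l`; together with `∑_{l ≥ 2} 1 / l² ≤ 1` and the
harmonic bound `∑_{l ≤ m} 1 / l ≥ log (m + 1)`, each inner sum is at most `4 - log (m + 1)`.
Summing over `m = 2, …, n - 1` leaves `4 (n - 2) - log (n! / 2)`, and Stirling's lower bound
`log n! ≥ n log n - n` finishes.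
-/

lemma one_sub_div_add_one_sq_le {x : ℝ} (hx : 0 < x) :
    (1 - x) / (x + 1) ^ 2 ≤ 3 / x ^ 2 - 1 / x := by
  rw [div_sub_div _ _ (by positivity) hx.ne', div_le_div_iff₀ (by positivity) (by positivity)]
  nlinarith [pow_pos hx 3]

lemma sum_Icc_two_one_div_sq_le_one (m : ℕ) : ∑ l ∈ Icc 2 m, 1 / (l : ℝ) ^ 2 ≤ 1 := by
  have h := sum_Ioo_inv_sq_le (α := ℝ) 1 (m + 1)
  rw [Ioo_add_one_right_eq_Ioc, ← Icc_add_one_left_eq_Ioc] at h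
  norm_num at h
  simpa only [one_div] using h

lemma log_add_one_sub_one_le_sum_Icc_two_one_div (m : ℕ) :
    log (m + 1) - 1 ≤ ∑ l ∈ Icc 2 m, 1 / (l : ℝ) := by
  rcases m.eq_zero_or_pos with rfl | hm
  · simp
  have h := log_add_one_le_harmonic m
  rw [harmonic_eq_sum_Icc, Icc_eq_cons_Ioc hm, sum_cons, ← Icc_add_one_left_eq_Ioc] at h
  push_cast at h
  simp only [one_div]
  linarith

lemma sum_Icc_two_one_sub_div_add_one_sq_le (m : ℕ) :
    ∑ l ∈ Icc 2 m, (1 - (l : ℝ)) / ((l : ℝ) + 1) ^ 2 ≤ 4 - log (m + 1) := by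
  calc _ ≤ ∑ l ∈ Icc 2 m, (3 * (1 / (l : ℝ) ^ 2) - 1 / l) := by
        refine sum_le_sum fun l hl => ?_
        have hl : (0 : ℝ) < l := by have := (mem_Icc.mp hl).1; positivity
        simpa only [mul_one_div] using one_sub_div_add_one_sq_le hl
    _ = 3 * ∑ l ∈ Icc 2 m, 1 / (l : ℝ) ^ 2 - ∑ l ∈ Icc 2 m, 1 / (l : ℝ) := by
        rw [sum_sub_distrib, mul_sum]
    _ ≤ 3 * 1 - (log (m + 1) - 1) := by
        gcongr
        exacts [sum_Icc_two_one_div_sq_le_one m, log_add_one_sub_one_le_sum_Icc_two_one_div m]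
    _ = 4 - log (m + 1) := by ring

lemma sum_range_log_add_one (n : ℕ) : ∑ i ∈ range n, log (i + 1 : ℝ) = log n ! := by
  rw [← prod_range_add_one_eq_factorial, Nat.cast_prod, log_prod fun i _ => by positivity]
  simp

lemma sum_range_log_add_three (p : ℕ) :
    ∑ j ∈ range p, log (j + 3 : ℝ) = log (p + 2)! - log 2 := by
  rw [← sum_range_log_add_one, sum_range_succ', sum_range_succ']
  norm_num [add_assoc]

lemma mul_log_sub_le_log_factorial (n : ℕ) : n * log n - n ≤ log n ! := by
  rcases eq_or_ne n 0 with rfl | hn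
  · simp
  have h := Stirling.le_log_factorial_stirling hn
  have : 0 ≤ log n := log_natCast_nonneg n
  have : 0 ≤ log (2 * π) := log_nonneg (by linarith [two_le_pi])
  linarith

theorem stmt_17 (n : ℕ) (hn : 3 ≤ n) :
    ∑ k ∈ Finset.range (n - 2), ∑ l ∈ Finset.Icc 2 (n - 1 - k),
      (1 - (l : ℝ)) / ((l : ℝ) + 1) ^ 2 ≤ 5 * n + 4 - n * Real.log n := by
  obtain ⟨p, rfl⟩ : ∃ p, n = p + 2 := ⟨n - 2, by omega⟩
  calc _ = ∑ j ∈ range p, ∑ l ∈ Icc 2 (j + 2), (1 - (l : ℝ)) / ((l : ℝ) + 1) ^ 2 := by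
        rw [Nat.add_sub_cancel, ← sum_range_reflect]
        refine sum_congr rfl fun k hk => ?_
        rw [show p + 2 - 1 - (p - 1 - k) = k + 2 by have := mem_range.mp hk; omega]
    _ ≤ ∑ j ∈ range p, (4 - log (j + 3 : ℝ)) := by
        refine sum_le_sum fun j _ => ?_
        have h := sum_Icc_two_one_sub_div_add_one_sq_le (j + 2)
        rwa [show ((j + 2 : ℕ) : ℝ) + 1 = j + 3 by push_cast; ring] at h
    _ = 4 * p - (log (p + 2)! - log 2) := by
        rw [sum_sub_distrib, sum_range_log_add_three]
        simp [mul_comm]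
    _ ≤ 5 * ↑(p + 2) + 4 - ↑(p + 2) * log ↑(p + 2) := by
        have h := mul_log_sub_le_log_factorial (p + 2)
        push_cast at h ⊢
        linarith [log_two_lt_d9]
end
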